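/- arXiv:0812.0117 — 3 statements merged into one kernel-verified Lean document; each statement's English description precedes it below -/
import Mathlib

section
/- Let N > 3 be a natural number, k ∈ {1, ..., N−2}, and t > 0. Then the sum I_t(k,N) := Σ_{j=k+1}^{N−1} exp(−t(1 − cos(πj/N))) satisfies I_t(k,N) ≤ (1/2)·√(π/2)·(N/√t)·exp(−2t k²/N²). -/
/-!
On `[0, 1]` one has `1 - cos (π x) ≥ 2 x²`, so with `a = 2t/N²` every term is at most the Gaussian
weight `exp (-a j²)`. For `j > k ≥ 0`, `j² ≥ k² + (j - k)²`, which pulls out the factor `exp (-a k²)`;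
the remaining sum over `i = j - k ≥ 1` is bounded by the half-line Gaussian integral `√(π/a) / 2`.
-/

open Real Finset

lemma two_mul_sq_le_one_sub_cos_pi_mul {x : ℝ} (hx : |x| ≤ 1) : 2 * x ^ 2 ≤ 1 - cos (π * x) := by
  have hπx : |π * x| ≤ π := by
    rw [abs_mul, abs_of_pos pi_pos]
    exact mul_le_of_le_one_right pi_pos.le hx
  have := cos_le_one_sub_mul_cos_sq hπx
  field_simp at this
  linarith

lemma exp_neg_mul_one_sub_cos_le {t : ℝ} (ht : 0 ≤ t) {j N : ℕ} (hj : j ≤ N) :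
    exp (-t * (1 - cos (π * j / N))) ≤ exp (-(2 * t / N ^ 2) * j ^ 2) := by
  have hjN : |(j / N : ℝ)| ≤ 1 := by
    rw [abs_of_nonneg (by positivity)]
    exact div_le_one_of_le₀ (mod_cast hj) (Nat.cast_nonneg N)
  have := two_mul_sq_le_one_sub_cos_pi_mul hjN
  rw [← mul_div_assoc] at this
  rw [exp_le_exp, show -(2 * t / N ^ 2) * (j : ℝ) ^ 2 = -t * (2 * (j / N : ℝ) ^ 2) by ring]
  nlinarith

lemma exp_neg_mul_sq_le_mul_exp_neg_mul_sq_sub {a c x : ℝ} (ha : 0 ≤ a) (hc : 0 ≤ c)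
    (hcx : c ≤ x) : exp (-a * x ^ 2) ≤ exp (-a * c ^ 2) * exp (-a * (x - c) ^ 2) := by
  rw [← exp_add, exp_le_exp]
  nlinarith [mul_nonneg (mul_nonneg ha hc) (sub_nonneg.2 hcx)]

lemma sum_range_exp_neg_mul_sq_succ_le {a : ℝ} (ha : 0 < a) (n : ℕ) :
    ∑ i ∈ range n, exp (-a * ((i + 1 : ℕ) : ℝ) ^ 2) ≤ √(π / a) / 2 := by
  rw [← integral_gaussian_Ioi]
  refine AntitoneOn.sum_range_le_integral (f := fun x ↦ exp (-a * x ^ 2)) ?_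
    (integrable_exp_neg_mul_sq ha).integrableOn fun x _ ↦ (exp_pos _).le
  intro x hx y _ hxy
  simp only [exp_le_exp]
  nlinarith [mul_le_mul hxy hxy hx.1 (hx.1.trans hxy)]

lemma sum_Icc_exp_neg_mul_sq_le {a : ℝ} (ha : 0 < a) (k M : ℕ) :
    ∑ j ∈ Icc (k + 1) M, exp (-a * j ^ 2) ≤ exp (-a * k ^ 2) * (√(π / a) / 2) := by
  calc ∑ j ∈ Icc (k + 1) M, exp (-a * j ^ 2)
      ≤ ∑ j ∈ Icc (k + 1) M, exp (-a * k ^ 2) * exp (-a * ((j : ℝ) - k) ^ 2) := by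
        refine sum_le_sum fun j hj ↦ exp_neg_mul_sq_le_mul_exp_neg_mul_sq_sub ha.le
          (Nat.cast_nonneg k) ?_
        exact_mod_cast (Nat.le_succ k).trans (mem_Icc.1 hj).1
    _ = exp (-a * k ^ 2) * ∑ i ∈ range (M - k), exp (-a * ((i + 1 : ℕ) : ℝ) ^ 2) := by
        rw [← mul_sum, ← Ico_add_one_right_eq_Icc, sum_Ico_eq_sum_range, Nat.add_sub_add_right]
        push_cast
        ring_nf
    _ ≤ exp (-a * k ^ 2) * (√(π / a) / 2) :=
        mul_le_mul_of_nonneg_left (sum_range_exp_neg_mul_sq_succ_le ha _) (exp_pos _).le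

theorem eigenvalue_sum_gaussian_bound_general (N k : ℕ) (hN : 3 < N)
    (t : ℝ) (ht : 0 < t) :
    ∑ j ∈ Finset.Icc (k + 1) (N - 1),
        Real.exp (-t * (1 - Real.cos (Real.pi * j / N))) ≤
      (1 / 2) * Real.sqrt (Real.pi / 2) * ((N : ℝ) / Real.sqrt t) *
        Real.exp (-2 * t * k ^ 2 / N ^ 2) := by
  have hN0 : (0 : ℝ) < N := Nat.cast_pos.2 (by omega)
  have hsqrt : √(π / (2 * t / N ^ 2)) = √(π / 2) * (N / √t) := by
    rw [show π / (2 * t / N ^ 2) = π / 2 * (N ^ 2 / t) by field_simp, sqrt_mul (by positivity),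
      sqrt_div' _ ht.le, sqrt_sq hN0.le]
  calc ∑ j ∈ Icc (k + 1) (N - 1), exp (-t * (1 - cos (π * j / N)))
      ≤ ∑ j ∈ Icc (k + 1) (N - 1), exp (-(2 * t / N ^ 2) * j ^ 2) :=
        sum_le_sum fun j hj ↦ exp_neg_mul_one_sub_cos_le ht.le ((mem_Icc.1 hj).2.trans (N.sub_le 1))
    _ ≤ exp (-(2 * t / N ^ 2) * k ^ 2) * (√(π / (2 * t / N ^ 2)) / 2) :=
        sum_Icc_exp_neg_mul_sq_le (by positivity) k (N - 1)
    _ = _ := by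
        rw [hsqrt]
        ring_nf

theorem eigenvalue_sum_gaussian_bound (N k : ℕ) (hN : 3 < N) (hk1 : 1 ≤ k)
    (hk2 : k ≤ N - 2) (t : ℝ) (ht : 0 < t) :
    ∑ j ∈ Finset.Icc (k + 1) (N - 1),
        Real.exp (-t * (1 - Real.cos (Real.pi * j / N))) ≤
      (1 / 2) * Real.sqrt (Real.pi / 2) * ((N : ℝ) / Real.sqrt t) *
        Real.exp (-2 * t * k ^ 2 / N ^ 2) :=
  eigenvalue_sum_gaussian_bound_general N k hN t ht
end

section
/- Let G be a finite connected simple graph with N vertices and maximum degree δ, and let P be the transition matrix of the delayed random walk on G (P_{vw} = 1/δ if {v,w} is an edge, P_{vv} = 1 − deg(v)/δ, 0 otherwise). Then the spectral gap satisfies 1 − β₂ ≥ 4/(δ N²), where β₂ is the second largest eigenvalue of P. -/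
/-!
Write the delayed walk as `P = 1 - L / δ` with `L` the graph Laplacian. An eigenvector `f` of `P`
for `β ≠ 1` is an eigenvector of `L` for `δ (1 - β) ≠ 0`, hence orthogonal to the constants.
List the values of `f` in nondecreasing order `g 0 ≤ ⋯ ≤ g (N - 1)`. By connectivity every cut
between the first `m + 1` vertices and the rest is crossed by an edge, and an edge `uv` pays
`(f u - f v) ^ 2`, which is at least the sum of the squared gaps it spans; so the Dirichlet form
of `g` on the path is at most `f ⬝ L f`. The path inequality
`4 ∑ g ^ 2 ≤ N ^ 2 ∑ (g (m + 1) - g m) ^ 2` for mean-zero `g` (Cauchy–Schwarz along the path,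
and at most `N ^ 2 / 4` pairs separated by each gap) then gives `4 ≤ N ^ 2 δ (1 - β)`.
-/

open Matrix

/-- The transition matrix of the delayed (lazy) random walk with degree parameter `δ`. -/
noncomputable def delayedRW {V : Type*} [Fintype V] [DecidableEq V] (G : SimpleGraph V)
    [DecidableRel G.Adj] (δ : ℕ) : Matrix V V ℝ :=
  fun v w => if G.Adj v w then 1 / δ else if v = w then 1 - G.degree v / δ else 0

open Finset

section PathPoincare

variable (g : ℕ → ℝ)

theorem sum_range_sum_range_sq_sub (N : ℕ) :
    ∑ j ∈ range N, ∑ i ∈ range j, (g j - g i) ^ 2 =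
      N * ∑ i ∈ range N, g i ^ 2 - (∑ i ∈ range N, g i) ^ 2 := by
  induction N with
  | zero => simp
  | succ N ih =>
    have hrow : ∑ i ∈ range N, (g N - g i) ^ 2 =
        N * g N ^ 2 - 2 * g N * ∑ i ∈ range N, g i + ∑ i ∈ range N, g i ^ 2 := by
      simp only [sub_sq, sum_add_distrib, sum_sub_distrib, sum_const, card_range, nsmul_eq_mul,
        mul_sum]
    rw [sum_range_succ, ih, hrow, sum_range_succ, sum_range_succ]
    push_cast
    ring

theorem sq_sub_le_mul_sum_sq_sub_Ico {i j : ℕ} (hij : i ≤ j) :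
    (g j - g i) ^ 2 ≤ (j - i : ℕ) * ∑ m ∈ Ico i j, (g (m + 1) - g m) ^ 2 := by
  rw [← sum_Ico_sub g hij, ← Nat.card_Ico]
  exact sq_sum_le_card_mul_sum_sq

theorem sum_sq_sub_Ico_le_sq_sub {N i j : ℕ} (hg : MonotoneOn g (Set.Iio N)) (hij : i ≤ j)
    (hj : j < N) : ∑ m ∈ Ico i j, (g (m + 1) - g m) ^ 2 ≤ (g j - g i) ^ 2 := by
  rw [← sum_Ico_sub g hij]
  refine sum_sq_le_sq_sum_of_nonneg fun m hm => sub_nonneg.2 (hg ?_ ?_ m.le_succ) <;>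
    simp only [mem_Ico, Set.mem_Iio] at hm ⊢ <;> omega

theorem sum_range_sum_range_sum_Ico (F : ℕ → ℝ) (N : ℕ) :
    ∑ j ∈ range N, ∑ i ∈ range j, ∑ m ∈ Ico i j, F m =
      ∑ m ∈ range (N - 1), ((m + 1) * (N - (m + 1)) : ℕ) * F m := by
  calc _ = ∑ j ∈ range N, ∑ m ∈ range j, ∑ _i ∈ range (m + 1), F m :=
        sum_congr rfl fun j _ => sum_comm' fun i m => by simp only [mem_range, mem_Ico]; omega
    _ = ∑ m ∈ range (N - 1), ∑ _j ∈ Ioo m N, ∑ _i ∈ range (m + 1), F m :=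
        sum_comm' fun j m => by simp only [mem_range, mem_Ioo]; omega
    _ = _ := by
        refine sum_congr rfl fun m _ => ?_
        simp only [sum_const, card_range, Nat.card_Ioo, nsmul_eq_mul]
        push_cast [Nat.sub_sub]
        ring

theorem path_poincare (N : ℕ) (hg : ∑ i ∈ range N, g i = 0) :
    4 * ∑ i ∈ range N, g i ^ 2 ≤ N ^ 2 * ∑ m ∈ range (N - 1), (g (m + 1) - g m) ^ 2 := by
  rcases N.eq_zero_or_pos with rfl | hN
  · simp
  refine le_of_mul_le_mul_left ?_ (show (0 : ℝ) < N by exact_mod_cast hN)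
  calc (N : ℝ) * (4 * ∑ i ∈ range N, g i ^ 2)
      = 4 * ∑ j ∈ range N, ∑ i ∈ range j, (g j - g i) ^ 2 := by
        rw [sum_range_sum_range_sq_sub, hg]; ring
    _ ≤ 4 * ∑ j ∈ range N, ∑ i ∈ range j, N * ∑ m ∈ Ico i j, (g (m + 1) - g m) ^ 2 := by
        gcongr with j hj i hi
        refine (sq_sub_le_mul_sum_sq_sub_Ico g (mem_range.1 hi).le).trans ?_
        refine mul_le_mul_of_nonneg_right ?_ (sum_nonneg fun _ _ => sq_nonneg _)
        exact Nat.cast_le.2 (by rw [mem_range] at hj; omega)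
    _ = N * ∑ m ∈ range (N - 1), (4 * (m + 1) * (N - (m + 1)) : ℕ) * (g (m + 1) - g m) ^ 2 := by
        simp only [← mul_sum, sum_range_sum_range_sum_Ico]
        push_cast
        simp only [mul_sum]
        ring_nf
    _ ≤ N * ∑ m ∈ range (N - 1), (N ^ 2 : ℝ) * (g (m + 1) - g m) ^ 2 := by
        gcongr with m hm
        have hsplit : m + 1 + (N - (m + 1)) = N := by rw [mem_range] at hm; omega
        exact_mod_cast hsplit ▸ four_mul_le_sq_add (m + 1) (N - (m + 1))
    _ = N * (N ^ 2 * ∑ m ∈ range (N - 1), (g (m + 1) - g m) ^ 2) := by simp only [mul_sum]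

end PathPoincare

theorem exists_equiv_fin_monotoneOn {V : Type*} [Fintype V] (f : V → ℝ) :
    ∃ (r : V ≃ Fin (Fintype.card V)) (g : ℕ → ℝ),
      (∀ v, g (r v) = f v) ∧ MonotoneOn g (Set.Iio (Fintype.card V)) := by
  set e := Fintype.equivFin V
  set σ := Tuple.sort (f ∘ e.symm)
  refine ⟨e.trans σ.symm, fun m => if h : m < Fintype.card V then f (e.symm (σ ⟨m, h⟩)) else 0,
    fun v => by simp, fun a ha b hb hab => ?_⟩
  simp only [Set.mem_Iio] at ha hb
  simpa [ha, hb] using Tuple.monotone_sort (f ∘ e.symm) (show (⟨a, ha⟩ : Fin _) ≤ ⟨b, hb⟩ from hab)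

theorem Matrix.exists_mulVec_eq_smul_of_mem_spectrum {K n : Type*} [Field K] [Fintype n]
    [DecidableEq n] {A : Matrix n n K} {β : K} (h : β ∈ spectrum K A) :
    ∃ f ≠ 0, A *ᵥ f = β • f := by
  rw [← spectrum_toLin', ← Module.End.hasEigenvalue_iff_mem_spectrum] at h
  obtain ⟨f, hf⟩ := h.exists_hasEigenvector
  exact ⟨f, hf.2, by simpa using hf.apply_eq_smul⟩

namespace SimpleGraph

theorem Connected.exists_adj_le_lt {V : Type*} {G : SimpleGraph V} (hG : G.Connected)
    (r : V → ℕ) {a b : V} {m : ℕ} (ha : r a ≤ m) (hb : m < r b) :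
    ∃ u v, G.Adj u v ∧ r u ≤ m ∧ m < r v := by
  obtain ⟨p⟩ := hG.preconnected a b
  obtain ⟨d, -, hd₁, hd₂⟩ := p.exists_boundary_dart {v | r v ≤ m} ha (by simpa using hb)
  exact ⟨d.fst, d.snd, d.adj, hd₁, by simpa using hd₂⟩

variable {V : Type*} [Fintype V] (G : SimpleGraph V) [DecidableRel G.Adj]

theorem sum_adj_sq_sub_eq_two_mul {r : V → ℕ} (hr : Function.Injective r) (f : V → ℝ) :
    ∑ u, ∑ v, (if G.Adj u v then (f u - f v) ^ 2 else 0) =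
      2 * ∑ u, ∑ v, if G.Adj u v ∧ r u < r v then (f u - f v) ^ 2 else 0 := by
  have hsplit : ∀ u v, (if G.Adj u v then (f u - f v) ^ 2 else 0) =
      (if G.Adj u v ∧ r u < r v then (f u - f v) ^ 2 else 0) +
        if G.Adj v u ∧ r v < r u then (f v - f u) ^ 2 else 0 := by
    intro u v
    by_cases huv : G.Adj u v
    · rcases (hr.ne (G.ne_of_adj huv)).lt_or_gt with h | h
      · simp [huv, h, h.not_gt]
      · simp [huv, huv.symm, h, h.not_gt, sq, sub_mul, mul_sub]; ring
    · have hvu : ¬G.Adj v u := fun h => huv h.symm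
      simp [huv, hvu]
  simp_rw [hsplit, sum_add_distrib]
  rw [sum_comm (f := fun u v => if G.Adj v u ∧ r v < r u then (f v - f u) ^ 2 else 0)]
  ring

variable [DecidableEq V]

theorem delayedRW_eq_one_sub_smul_lapMatrix (δ : ℕ) :
    delayedRW G δ = 1 - (δ : ℝ)⁻¹ • G.lapMatrix ℝ := by
  ext v w
  by_cases hvw : v = w
  · subst hvw
    simp [delayedRW, lapMatrix, degMatrix, div_eq_inv_mul]
  · by_cases hadj : G.Adj v w <;> simp [delayedRW, lapMatrix, degMatrix, hvw, hadj]

theorem lapMatrix_mulVec_eq_smul_of_delayedRW_mulVec_eq_smul {δ : ℕ} (hδ : (δ : ℝ) ≠ 0)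
    {f : V → ℝ} {β : ℝ} (h : delayedRW G δ *ᵥ f = β • f) :
    G.lapMatrix ℝ *ᵥ f = (δ * (1 - β)) • f := by
  rw [delayedRW_eq_one_sub_smul_lapMatrix, sub_mulVec, one_mulVec, smul_mulVec] at h
  ext v
  have hv := congrFun h v
  simp only [Pi.sub_apply, Pi.smul_apply, smul_eq_mul] at hv ⊢
  field_simp at hv
  linarith

variable {G}

theorem Connected.sum_sq_sub_le_dotProduct_lapMatrix_mulVec (hG : G.Connected) {N : ℕ}
    (r : V ≃ Fin N) {f : V → ℝ} {g : ℕ → ℝ} (hfg : ∀ v, g (r v) = f v)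
    (hg : MonotoneOn g (Set.Iio N)) :
    ∑ m ∈ range (N - 1), (g (m + 1) - g m) ^ 2 ≤ f ⬝ᵥ (G.lapMatrix ℝ *ᵥ f) := by
  set d : ℕ → ℝ := fun m => (g (m + 1) - g m) ^ 2
  have hcut : ∀ m ∈ range (N - 1),
      d m ≤ ∑ u, ∑ v, if G.Adj u v ∧ (r u : ℕ) ≤ m ∧ m < r v then d m else 0 := by
    intro m hm
    rw [mem_range] at hm
    obtain ⟨u, v, huv, hu, hv⟩ := hG.exists_adj_le_lt (fun v => (r v : ℕ))
      (m := m) (a := r.symm ⟨0, by omega⟩) (b := r.symm ⟨m + 1, by omega⟩) (by simp) (by simp)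
    have hnonneg : ∀ u v, 0 ≤ if G.Adj u v ∧ (r u : ℕ) ≤ m ∧ m < r v then d m else 0 :=
      fun _ _ => by split_ifs <;> positivity
    calc d m = if G.Adj u v ∧ (r u : ℕ) ≤ m ∧ m < r v then d m else 0 := by
          rw [if_pos ⟨huv, hu, hv⟩]
      _ ≤ ∑ v, if G.Adj u v ∧ (r u : ℕ) ≤ m ∧ m < r v then d m else 0 :=
          single_le_sum (fun v _ => hnonneg u v) (mem_univ v)
      _ ≤ _ := single_le_sum (fun u _ => sum_nonneg fun v _ => hnonneg u v) (mem_univ u)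
  have hedge : ∀ u v, ∑ m ∈ range (N - 1),
      (if G.Adj u v ∧ (r u : ℕ) ≤ m ∧ m < r v then d m else 0) ≤
        if G.Adj u v ∧ (r u : ℕ) < r v then (f u - f v) ^ 2 else 0 := by
    intro u v
    split_ifs with h
    · rw [← sum_filter]
      calc _ ≤ ∑ m ∈ Ico (r u : ℕ) (r v), d m :=
            sum_le_sum_of_subset_of_nonneg (fun m hm => by simp_all) fun _ _ _ => sq_nonneg _
        _ ≤ (g (r v) - g (r u)) ^ 2 := sum_sq_sub_Ico_le_sq_sub g hg h.2.le (r v).isLt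
        _ = (f u - f v) ^ 2 := by rw [hfg, hfg]; ring
    · refine (sum_eq_zero fun m _ => if_neg ?_).le
      rintro ⟨huv, hu, hv⟩
      exact h ⟨huv, by omega⟩
  rw [← toLinearMap₂'_apply', lapMatrix_toLinearMap₂',
    sum_adj_sq_sub_eq_two_mul G (Fin.val_injective.comp r.injective),
    mul_div_cancel_left₀ _ two_ne_zero]
  calc ∑ m ∈ range (N - 1), d m
      ≤ ∑ m ∈ range (N - 1), ∑ u, ∑ v, if G.Adj u v ∧ (r u : ℕ) ≤ m ∧ m < r v then d m else 0 :=
        sum_le_sum hcut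
    _ = ∑ u, ∑ v, ∑ m ∈ range (N - 1), if G.Adj u v ∧ (r u : ℕ) ≤ m ∧ m < r v then d m else 0 := by
        rw [sum_comm]; simp_rw [sum_comm (s := range (N - 1))]
    _ ≤ _ := sum_le_sum fun u _ => sum_le_sum fun v _ => hedge u v

theorem Connected.four_mul_sum_sq_le (hG : G.Connected) {f : V → ℝ} (hf : ∑ v, f v = 0) :
    4 * ∑ v, f v ^ 2 ≤ Fintype.card V ^ 2 * (f ⬝ᵥ (G.lapMatrix ℝ *ᵥ f)) := by
  obtain ⟨r, g, hfg, hg⟩ := exists_equiv_fin_monotoneOn f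
  have htransport : ∀ φ : ℝ → ℝ, ∑ i ∈ range (Fintype.card V), φ (g i) = ∑ v, φ (f v) :=
    fun φ => by rw [← Fin.sum_univ_eq_sum_range (fun i => φ (g i)), ← r.sum_comp]; simp [hfg]
  calc 4 * ∑ v, f v ^ 2 = 4 * ∑ i ∈ range (Fintype.card V), g i ^ 2 := by
        rw [htransport (· ^ 2)]
    _ ≤ _ := path_poincare g _ ((htransport id).trans hf)
    _ ≤ _ := by gcongr; exact hG.sum_sq_sub_le_dotProduct_lapMatrix_mulVec r hfg hg

theorem Connected.four_le_card_sq_mul_of_lapMatrix_mulVec_eq_smul (hG : G.Connected) {f : V → ℝ}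
    (hf : f ≠ 0) {μ : ℝ} (hμ : μ ≠ 0) (hLf : G.lapMatrix ℝ *ᵥ f = μ • f) :
    4 ≤ Fintype.card V ^ 2 * μ := by
  have hsum : ∑ v, f v = 0 := by
    have : μ * ∑ v, f v = 0 :=
      calc μ * ∑ v, f v = (fun _ => 1) ⬝ᵥ (G.lapMatrix ℝ *ᵥ f) := by
            simp [hLf, dotProduct, mul_sum]
        _ = (G.lapMatrix ℝ *ᵥ fun _ => 1) ⬝ᵥ f := by
            rw [dotProduct_mulVec, ← mulVec_transpose, (G.isSymm_lapMatrix ℝ).eq]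
        _ = 0 := by rw [lapMatrix_mulVec_const_eq_zero, zero_dotProduct]
    exact (mul_eq_zero.1 this).resolve_left hμ
  have hQ : 0 < ∑ v, f v ^ 2 := by
    obtain ⟨v, hv : f v ≠ 0⟩ := Function.ne_iff.1 hf
    exact sum_pos' (fun _ _ => sq_nonneg _) ⟨v, mem_univ v, by positivity⟩
  have hpoincare := hG.four_mul_sum_sq_le hsum
  rw [hLf, dotProduct_smul, smul_eq_mul] at hpoincare
  simp only [dotProduct, ← sq] at hpoincare
  exact le_of_mul_le_mul_right (by linarith) hQ

end SimpleGraph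

theorem poincare_spectral_gap_general (N : ℕ) (hN : 0 < N) (G : SimpleGraph (Fin N))
    [DecidableRel G.Adj] (hconn : G.Connected) (δ : ℕ)
    (hδpos : 0 < δ) :
    ∀ β ∈ spectrum ℝ (delayedRW G δ), β ≠ 1 → β ≤ 1 - 4 / ((δ : ℝ) * N ^ 2) := by
  intro β hβ hβ1
  obtain ⟨f, hf, hPf⟩ := Matrix.exists_mulVec_eq_smul_of_mem_spectrum hβ
  have hδ : (δ : ℝ) ≠ 0 := by positivity
  have hgap := hconn.four_le_card_sq_mul_of_lapMatrix_mulVec_eq_smul hf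
    (mul_ne_zero hδ (sub_ne_zero.2 hβ1.symm))
    (G.lapMatrix_mulVec_eq_smul_of_delayedRW_mulVec_eq_smul hδ hPf)
  rw [Fintype.card_fin] at hgap
  rw [le_sub_comm, div_le_iff₀ (by positivity)]
  linarith

theorem poincare_spectral_gap (N : ℕ) (hN : 0 < N) (G : SimpleGraph (Fin N))
    [DecidableRel G.Adj] (hconn : G.Connected) (δ : ℕ) (hδ : G.maxDegree = δ)
    (hδpos : 0 < δ) :
    ∀ β ∈ spectrum ℝ (delayedRW G δ), β ≠ 1 → β ≤ 1 - 4 / ((δ : ℝ) * N ^ 2) :=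
  poincare_spectral_gap_general N hN G hconn δ hδpos
end

section
/- Let μ be a probability measure on cluster sizes, i.e., a random variable |C| taking values in the positive integers, such that A·m^{−a} ≤ P[|C| ≥ m] ≤ B·m^{−b} for all m ≥ 1, with A, B, a > 0 and 0 < b < 1. Then for all t > √288, E[(1/|C|)·exp(−tK/√|C|)] ≥ D·t^{−2a(1+1/b)}, where D = e^{−K}·(A/2)/(1 + (2B/A)^{1/b}) and K > 0 is any constant. -/
/-!
On `{|C| ≥ t²}` the factor `exp (-t K / √|C|)` is at least `e^{-K}`, so it suffices to find mass at
sizes not much larger than `t²`. The two tail bounds provide it: with `R = (2B/A)^{1/b}`, the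
window `[P, R P^{a/b}]` has probability at least `(A/2) P^{-a}` and there `1/|C|` is at least
`1 / ((1 + R) P^{a/b})`, which yields `(A/2)/(1+R) · P^{-a(1+1/b)}`.

As `t²` need not be an integer, the window starts at `P = ⌈t²⌉` when `K ≥ 4a(1 + 1/b)`: then
`x ↦ exp (-t K / √x) x^{-a(1+1/b)}` increases on `[t², 4t²]`. Otherwise it starts at `P = ⌊t²⌋`,
and only the point `P ≤ t²` itself sees less than `e^{-K}`, by a factor at least
`exp (-K / (2P)) ≥ exp (-a / (72 b))`; this is compensated by `1/P` exceeding the window's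
`1 / (R P^{a/b}) ≤ 1 / (2 P^{a/b})`, because `P ≥ 288`. (The two tail bounds force `b ≤ a` and
`A ≤ B`, hence `R ≥ 2`.)
-/

open MeasureTheory Real Filter

theorem le_of_forall_mul_rpow_neg_le {A B a b : ℝ} (hA : 0 < A)
    (h : ∀ m : ℕ, 1 ≤ m → A * (m : ℝ) ^ (-a) ≤ B * (m : ℝ) ^ (-b)) : b ≤ a := by
  by_contra! hab
  have hgrow : Tendsto (fun m : ℕ => (m : ℝ) ^ (b - a)) atTop atTop :=
    (tendsto_rpow_atTop (sub_pos.2 hab)).comp tendsto_natCast_atTop_atTop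
  obtain ⟨m, hm1, hmB⟩ :=
    ((tendsto_id.eventually_ge_atTop 1).and (hgrow.eventually_gt_atTop (B / A))).exists
  have hm0 : (0 : ℝ) < m := by exact_mod_cast hm1
  have hsplit : (m : ℝ) ^ (-a) = (m : ℝ) ^ (b - a) * (m : ℝ) ^ (-b) := by
    rw [← rpow_add hm0]; congr 1; ring
  have := h m hm1
  rw [hsplit, ← mul_assoc] at this
  have := le_of_mul_le_mul_right this (rpow_pos_of_pos hm0 _)
  rw [div_lt_iff₀ hA] at hmB
  linarith

theorem mul_rpow_neg_le_of_le {A B a b x y : ℝ} (hA : 0 < A) (hB : 0 < B) (hb : 0 < b)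
    (hx : 0 < x) (hy : (2 * B / A) ^ (1 / b) * x ^ (a / b) ≤ y) :
    B * y ^ (-b) ≤ A / 2 * x ^ (-a) := by
  have hBA : 0 < 2 * B / A := by positivity
  have hpos : 0 < (2 * B / A) ^ (1 / b) * x ^ (a / b) := by positivity
  have hscale : ((2 * B / A) ^ (1 / b) * x ^ (a / b)) ^ (-b) = A / (2 * B) * x ^ (-a) := by
    rw [mul_rpow (rpow_nonneg hBA.le _) (rpow_nonneg hx.le _), ← rpow_mul hBA.le,
      ← rpow_mul hx.le, show 1 / b * -b = -1 by field_simp, show a / b * -b = -a by field_simp,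
      rpow_neg_one, inv_div]
  calc B * y ^ (-b) ≤ B * ((2 * B / A) ^ (1 / b) * x ^ (a / b)) ^ (-b) :=
        mul_le_mul_of_nonneg_left (rpow_le_rpow_of_nonpos hpos hy (neg_nonpos.2 hb.le)) hB.le
    _ = A / 2 * x ^ (-a) := by rw [hscale]; field_simp

theorem exp_div_le_inv_mul_exp {t K p n Q : ℝ} (ht : 0 ≤ t) (hK : 0 ≤ K) (hp : 0 < p)
    (hpn : p ≤ n) (hnQ : n ≤ Q) :
    exp (-t * K / √p) / Q ≤ 1 / n * exp (-t * K / √n) := by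
  have hn : 0 < n := hp.trans_le hpn
  have hexp : -t * K / √p ≤ -t * K / √n := by
    rw [neg_mul, neg_div, neg_div, neg_le_neg_iff]
    exact div_le_div_of_nonneg_left (by positivity) (sqrt_pos.2 hp) (sqrt_le_sqrt hpn)
  rw [div_eq_inv_mul, one_div]
  exact mul_le_mul (inv_anti₀ hn hnQ) (exp_le_exp.2 hexp) (exp_pos _).le (inv_nonneg.2 hn.le)

theorem exp_neg_mul_rpow_neg_le {t K q M : ℝ} (ht : 0 < t) (hq : 0 ≤ q) (hK : 4 * q ≤ K)
    (hM : t ^ 2 ≤ M) (hM4 : M ≤ 4 * t ^ 2) :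
    exp (-K) * (t ^ 2) ^ (-q) ≤ exp (-t * K / √M) * M ^ (-q) := by
  have hM0 : 0 < M := (pow_pos ht 2).trans_le hM
  have htu : t ≤ √M := le_sqrt_of_sq_le hM
  have hu2 : √M ≤ 2 * t := sqrt_le_iff.2 ⟨by positivity, by linarith⟩
  have hu0 : 0 < √M := ht.trans_le htu
  have hlog : log M - log (t ^ 2) ≤ 2 * ((√M - t) / t) := by
    have h := log_le_sub_one_of_pos (div_pos hu0 ht)
    rw [log_div hu0.ne' ht.ne', log_sqrt hM0.le, div_sub_one ht.ne'] at h
    rw [log_pow]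
    push_cast
    linarith
  have hslack : q * (2 * ((√M - t) / t)) ≤ K - t * K / √M := by
    have e : K - t * K / √M = K * (√M - t) / √M := by field_simp
    rw [e, ← mul_div_assoc, ← mul_div_assoc, div_le_div_iff₀ ht hu0]
    have h1 : 0 ≤ √M - t := by linarith
    nlinarith [mul_nonneg (mul_nonneg hq h1) (sub_nonneg.2 hu2),
      mul_nonneg (mul_nonneg (by linarith : (0:ℝ) ≤ K - 4 * q) h1) ht.le]
  rw [rpow_def_of_pos (by positivity), rpow_def_of_pos hM0, ← exp_add, ← exp_add, exp_le_exp,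
    neg_mul, neg_div]
  linarith [mul_le_mul_of_nonneg_left hlog hq]

theorem exp_neg_div_le_inv_mul_exp {t K x R m Q : ℝ} (hm : 288 ≤ m) (hmt : m ≤ t ^ 2)
    (htm : t ^ 2 < m + 1) (ht : 0 ≤ t) (hK : 0 ≤ K) (hKx : K ≤ 8 * x) (hx : 1 ≤ x)
    (hR : 2 ≤ R) (hQ : R * m ^ x ≤ Q) :
    exp (-K) / Q ≤ 1 / m * exp (-t * K / √m) := by
  have hm0 : 0 < m := by linarith
  have hs0 : 0 < √m := sqrt_pos.2 hm0
  have hss : √m ^ 2 = m := sq_sqrt hm0.le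
  have hst : √m ≤ t := sqrt_le_iff.2 ⟨ht, hmt⟩
  -- `t ^ 2 < m + 1` makes `t` exceed `√m` by at most `1 / (2√m)`
  have hexcess : t * K / √m - K ≤ K / (2 * m) := by
    have h1 : (t - √m) * (2 * √m) ≤ 1 := by nlinarith
    have e : t * K / √m - K = K * (t - √m) / √m := by field_simp
    have e' : K * (t - √m) * (2 * m) = (t - √m) * (2 * √m) * (K * √m) := by
      linear_combination (-2 * K * (t - √m)) * hss
    rw [e, div_le_div_iff₀ hs0 (by positivity), e']
    nlinarith [mul_le_mul_of_nonneg_right h1 (mul_nonneg hK hs0.le)]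
  have hRm : 0 < R * m ^ x := by positivity
  have hlogQ : log 2 + x * log m ≤ log Q := by
    calc log 2 + x * log m ≤ log R + log (m ^ x) := by
          rw [log_rpow hm0]; gcongr
      _ = log (R * m ^ x) := (log_mul (by positivity) (by positivity)).symm
      _ ≤ log Q := log_le_log hRm hQ
  have hlogm : 1 ≤ log m := by
    rw [le_log_iff_exp_le hm0]
    linarith [exp_one_lt_d9]
  have hKm : K / (2 * m) ≤ x / 72 := by
    rw [div_le_div_iff₀ (by positivity) (by norm_num)]
    nlinarith
  have hl : exp (-K) / Q = exp (-K - log Q) := by rw [exp_sub, exp_log (hRm.trans_le hQ)]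
  have hr : 1 / m * exp (-t * K / √m) = exp (-log m - t * K / √m) := by
    rw [sub_eq_add_neg, exp_add, exp_neg, exp_log hm0, one_div, neg_mul, neg_div]
  rw [hl, hr, exp_le_exp]
  nlinarith [mul_nonneg (sub_nonneg.2 hx) (sub_nonneg.2 hlogm), log_two_gt_d9]

theorem two_le_rpow_one_div {A B b : ℝ} (hA : 0 < A) (hAB : A ≤ B) (hb0 : 0 < b)
    (hb1 : b ≤ 1) : 2 ≤ (2 * B / A) ^ (1 / b) := by
  have h2BA : 2 ≤ 2 * B / A := by rw [le_div_iff₀ hA]; linarith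
  calc (2 : ℝ) ≤ (2 * B / A) ^ (1 : ℝ) := by rwa [rpow_one]
    _ ≤ (2 * B / A) ^ (1 / b) :=
      rpow_le_rpow_of_exponent_le (by linarith) ((one_le_div hb0).2 hb1)

noncomputable def returnWeight (t K : ℝ) (n : ℕ) : ℝ := 1 / (n : ℝ) * exp (-t * K / √n)

theorem returnWeight_nonneg (t K : ℝ) : 0 ≤ returnWeight t K := fun n => by
  unfold returnWeight; positivity

theorem returnWeight_le_one {t K : ℝ} (ht : 0 ≤ t) (hK : 0 ≤ K) (n : ℕ) :
    returnWeight t K n ≤ 1 := by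
  rw [returnWeight, one_div]
  refine mul_le_one₀ (Nat.cast_inv_le_one _) (exp_pos _).le (exp_le_one_iff.2 ?_)
  rw [neg_mul, neg_div, neg_nonpos]
  positivity

theorem mul_measureReal_le_integral {Ω : Type*} [MeasurableSpace Ω] {μ : Measure Ω}
    [IsFiniteMeasure μ] {f : Ω → ℝ} {s : Set Ω} {c : ℝ} (hs : MeasurableSet s)
    (hf : Integrable f μ) (hf0 : 0 ≤ f) (hc : ∀ x ∈ s, c ≤ f x) :
    c * μ.real s ≤ ∫ x, f x ∂μ :=
  (setIntegral_ge_of_const_le_real hs (measure_ne_top μ s) hc hf.integrableOn).trans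
    (setIntegral_le_integral hf (.of_forall hf0))

/-- Past `windowEnd A B a b P`, the upper tail bound `B m ^ (-b)` is at most half the lower tail
bound `A P ^ (-a)` at `P`, so `[P, windowEnd A B a b P]` carries mass at least `A P ^ (-a) / 2`. -/
noncomputable def windowEnd (A B a b : ℝ) (P : ℕ) : ℕ :=
  ⌈(2 * B / A) ^ (1 / b) * (P : ℝ) ^ (a / b)⌉₊

theorem windowEnd_le {A B a b : ℝ} (hA : 0 < A) (hB : 0 < B) (hab : 0 ≤ a / b) {P : ℕ}
    (hP : 1 ≤ P) : (windowEnd A B a b P : ℝ) ≤ (1 + (2 * B / A) ^ (1 / b)) * (P : ℝ) ^ (a / b) := by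
  have hPx : 1 ≤ (P : ℝ) ^ (a / b) := one_le_rpow (by exact_mod_cast hP) hab
  have := Nat.ceil_lt_add_one (by positivity : 0 ≤ (2 * B / A) ^ (1 / b) * (P : ℝ) ^ (a / b))
  rw [windowEnd]
  linarith

section HeavyTail

variable {Ω : Type*} [MeasurableSpace Ω] {μ : Measure Ω} [IsFiniteMeasure μ] {C : Ω → ℕ}
  {A B a b : ℝ}

theorem integrable_returnWeight_comp (hC : Measurable C) {t K : ℝ} (ht : 0 ≤ t) (hK : 0 ≤ K) :
    Integrable (fun ω => returnWeight t K (C ω)) μ :=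
  .of_bound ((measurable_from_nat (f := returnWeight t K)).comp hC).aestronglyMeasurable 1
    (.of_forall fun ω => by
      rw [norm_of_nonneg (returnWeight_nonneg t K _)]
      exact returnWeight_le_one ht hK _)

theorem mul_rpow_neg_le_measureReal_window (hA : 0 < A) (hB : 0 < B) (hb : 0 < b)
    (hlow : ∀ m : ℕ, 1 ≤ m → A * (m : ℝ) ^ (-a) ≤ μ.real {ω | m ≤ C ω})
    (hup : ∀ m : ℕ, 1 ≤ m → μ.real {ω | m ≤ C ω} ≤ B * (m : ℝ) ^ (-b)) {P : ℕ} (hP : 1 ≤ P) :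
    A / 2 * (P : ℝ) ^ (-a) ≤ μ.real (C ⁻¹' Set.Icc P (windowEnd A B a b P)) := by
  set Q := windowEnd A B a b P
  have hcover : {ω | P ≤ C ω} ⊆ C ⁻¹' Set.Icc P Q ∪ {ω | Q + 1 ≤ C ω} := by
    intro ω (hω : P ≤ C ω)
    simp only [Set.mem_union, Set.mem_preimage, Set.mem_Icc, Set.mem_ofPred_eq]
    omega
  have hfar : μ.real {ω | Q + 1 ≤ C ω} ≤ A / 2 * (P : ℝ) ^ (-a) := by
    refine (hup (Q + 1) (Nat.le_add_left 1 Q)).trans ?_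
    push_cast
    have hQ : (2 * B / A) ^ (1 / b) * (P : ℝ) ^ (a / b) ≤ Q := Nat.le_ceil _
    exact mul_rpow_neg_le_of_le hA hB hb (by exact_mod_cast hP) (by linarith)
  linarith [hlow P hP, (measureReal_mono (μ := μ) hcover).trans (measureReal_union_le _ _)]

theorem mul_rpow_neg_le_integral (hC : Measurable C) {g : ℕ → ℝ} (hg0 : 0 ≤ g)
    (hg : Integrable (fun ω => g (C ω)) μ) (hA : 0 < A) (hB : 0 < B) (hb : 0 < b)
    (hab : 0 ≤ a / b)
    (hlow : ∀ m : ℕ, 1 ≤ m → A * (m : ℝ) ^ (-a) ≤ μ.real {ω | m ≤ C ω})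
    (hup : ∀ m : ℕ, 1 ≤ m → μ.real {ω | m ≤ C ω} ≤ B * (m : ℝ) ^ (-b)) {P : ℕ} (hP : 1 ≤ P)
    {w : ℝ} (hw : 0 ≤ w)
    (hgw : ∀ n ∈ Set.Icc P (windowEnd A B a b P), w / windowEnd A B a b P ≤ g n) :
    w * (A / 2) / (1 + (2 * B / A) ^ (1 / b)) * (P : ℝ) ^ (-(a + a / b)) ≤
      ∫ ω, g (C ω) ∂μ := by
  set Q := windowEnd A B a b P
  set R := (2 * B / A) ^ (1 / b)
  have hP0 : (0 : ℝ) < P := by exact_mod_cast hP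
  have hQ0 : (0 : ℝ) < Q :=
    (by positivity : 0 < R * (P : ℝ) ^ (a / b)).trans_le (Nat.le_ceil _)
  calc w * (A / 2) / (1 + R) * (P : ℝ) ^ (-(a + a / b))
      = w / ((1 + R) * (P : ℝ) ^ (a / b)) * (A / 2 * (P : ℝ) ^ (-a)) := by
        rw [neg_add, rpow_add hP0, rpow_neg hP0.le (a / b)]
        field_simp
    _ ≤ w / Q * (A / 2 * (P : ℝ) ^ (-a)) := by
        gcongr
        exact windowEnd_le hA hB hab hP
    _ ≤ w / Q * μ.real (C ⁻¹' Set.Icc P Q) := by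
        gcongr
        exact mul_rpow_neg_le_measureReal_window hA hB hb hlow hup hP
    _ ≤ ∫ ω, g (C ω) ∂μ :=
        mul_measureReal_le_integral (hC measurableSet_Icc) hg (fun ω => hg0 _)
          (fun ω hω => hgw _ hω)

theorem le_integral_returnWeight_of_four_mul_le (hC : Measurable C) (hA : 0 < A) (hB : 0 < B)
    (hb : 0 < b) (ha : 0 ≤ a)
    (hlow : ∀ m : ℕ, 1 ≤ m → A * (m : ℝ) ^ (-a) ≤ μ.real {ω | m ≤ C ω})
    (hup : ∀ m : ℕ, 1 ≤ m → μ.real {ω | m ≤ C ω} ≤ B * (m : ℝ) ^ (-b))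
    {t K : ℝ} (ht : 1 ≤ t) (hK : 4 * (a + a / b) ≤ K) :
    exp (-K) * (A / 2) / (1 + (2 * B / A) ^ (1 / b)) * (t ^ 2) ^ (-(a + a / b)) ≤
      ∫ ω, returnWeight t K (C ω) ∂μ := by
  set P := ⌈t ^ 2⌉₊
  have hab : 0 ≤ a / b := div_nonneg ha hb.le
  have ht0 : 0 < t := by linarith
  have hK0 : 0 ≤ K := by linarith
  have hP : t ^ 2 ≤ P := Nat.le_ceil _
  have hP4 : (P : ℝ) ≤ 4 * t ^ 2 := by nlinarith [Nat.ceil_lt_add_one (pow_pos ht0 2).le]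
  have hP0 : (0 : ℝ) < P := (pow_pos ht0 2).trans_le hP
  calc exp (-K) * (A / 2) / (1 + (2 * B / A) ^ (1 / b)) * (t ^ 2) ^ (-(a + a / b))
      = A / 2 / (1 + (2 * B / A) ^ (1 / b)) * (exp (-K) * (t ^ 2) ^ (-(a + a / b))) := by ring
    _ ≤ A / 2 / (1 + (2 * B / A) ^ (1 / b)) * (exp (-t * K / √P) * P ^ (-(a + a / b))) :=
        mul_le_mul_of_nonneg_left (exp_neg_mul_rpow_neg_le ht0 (by positivity) hK hP hP4)
          (by positivity)
    _ = exp (-t * K / √P) * (A / 2) / (1 + (2 * B / A) ^ (1 / b)) * P ^ (-(a + a / b)) := by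
        ring
    _ ≤ ∫ ω, returnWeight t K (C ω) ∂μ :=
        mul_rpow_neg_le_integral hC (returnWeight_nonneg t K)
          (integrable_returnWeight_comp hC ht0.le hK0) hA hB hb hab hlow hup
          (Nat.one_le_cast.1 (by nlinarith : (1 : ℝ) ≤ P)) (exp_pos _).le fun n hn =>
          exp_div_le_inv_mul_exp ht0.le hK0 hP0 (by exact_mod_cast hn.1) (by exact_mod_cast hn.2)

theorem le_integral_returnWeight_of_lt_four_mul (hC : Measurable C) (hA : 0 < A) (hB : 0 < B)
    (hb0 : 0 < b) (hb1 : b ≤ 1) (hba : b ≤ a) (hR : 2 ≤ (2 * B / A) ^ (1 / b))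
    (hlow : ∀ m : ℕ, 1 ≤ m → A * (m : ℝ) ^ (-a) ≤ μ.real {ω | m ≤ C ω})
    (hup : ∀ m : ℕ, 1 ≤ m → μ.real {ω | m ≤ C ω} ≤ B * (m : ℝ) ^ (-b))
    {t K : ℝ} (ht0 : 0 < t) (ht : 288 < t ^ 2) (hK0 : 0 ≤ K) (hK : K < 4 * (a + a / b)) :
    exp (-K) * (A / 2) / (1 + (2 * B / A) ^ (1 / b)) * (t ^ 2) ^ (-(a + a / b)) ≤
      ∫ ω, returnWeight t K (C ω) ∂μ := by
  set P := ⌊t ^ 2⌋₊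
  have hx : 1 ≤ a / b := (one_le_div hb0).2 hba
  have hax : a ≤ a / b := le_div_self (hb0.trans_le hba).le hb0 hb1
  have hP288 : 288 ≤ P := Nat.le_floor (by exact_mod_cast ht.le)
  have hP : (P : ℝ) ≤ t ^ 2 := Nat.floor_le (pow_pos ht0 2).le
  have hP1 : t ^ 2 < P + 1 := Nat.lt_floor_add_one _
  have hP0 : (0 : ℝ) < P := by positivity
  calc exp (-K) * (A / 2) / (1 + (2 * B / A) ^ (1 / b)) * (t ^ 2) ^ (-(a + a / b))
      ≤ exp (-K) * (A / 2) / (1 + (2 * B / A) ^ (1 / b)) * P ^ (-(a + a / b)) :=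
        mul_le_mul_of_nonneg_left (rpow_le_rpow_of_nonpos hP0 hP (by linarith)) (by positivity)
    _ ≤ ∫ ω, returnWeight t K (C ω) ∂μ := by
        refine mul_rpow_neg_le_integral hC (returnWeight_nonneg t K)
          (integrable_returnWeight_comp hC ht0.le hK0) hA hB hb0 (by linarith) hlow hup
          (by omega) (exp_pos _).le fun n hn => ?_
        rcases hn.1.eq_or_lt with rfl | hPn
        · exact exp_neg_div_le_inv_mul_exp (by exact_mod_cast hP288) hP hP1 ht0.le hK0
            (by linarith) hx hR (Nat.le_ceil _)
        · have htn : t ^ 2 ≤ n := by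
            linarith [show (P : ℝ) + 1 ≤ n by exact_mod_cast hPn]
          have he : -t * K / √(t ^ 2) = -K := by rw [sqrt_sq ht0.le]; field_simp
          have := exp_div_le_inv_mul_exp ht0.le hK0 (pow_pos ht0 2) htn
            (Q := windowEnd A B a b P) (by exact_mod_cast hn.2)
          rwa [he] at this

end HeavyTail

theorem annealed_return_lower_bound_general {Ω : Type*} [MeasurableSpace Ω]
    (μ : Measure Ω) [IsProbabilityMeasure μ]
    (C : Ω → ℕ) (hmeas : Measurable C)
    (A B a b : ℝ) (hA : 0 < A) (hb0 : 0 < b) (hb1 : b < 1)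
    (hlow : ∀ m : ℕ, 1 ≤ m → A * (m : ℝ) ^ (-a) ≤ (μ {ω | m ≤ C ω}).toReal)
    (hup : ∀ m : ℕ, 1 ≤ m → (μ {ω | m ≤ C ω}).toReal ≤ B * (m : ℝ) ^ (-b))
    (K : ℝ) (hK : 0 < K) (t : ℝ) (ht : Real.sqrt 288 < t) :
    Real.exp (-K) * (A / 2) / (1 + (2 * B / A) ^ (1 / b)) * t ^ (-(2 * a * (1 + 1 / b))) ≤
      ∫ ω, (1 / (C ω : ℝ)) * Real.exp (-t * K / Real.sqrt (C ω)) ∂μ := by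
  have ht0 : 0 < t := (sqrt_nonneg 288).trans_lt ht
  have hS : 288 < t ^ 2 := (sqrt_lt' ht0).1 ht
  have hAB : A ≤ B := by simpa using (hlow 1 le_rfl).trans (hup 1 le_rfl)
  have hB : 0 < B := hA.trans_le hAB
  have hba : b ≤ a := le_of_forall_mul_rpow_neg_le hA fun m hm => (hlow m hm).trans (hup m hm)
  have hexp : t ^ (-(2 * a * (1 + 1 / b))) = (t ^ 2) ^ (-(a + a / b)) := by
    rw [← rpow_natCast, ← rpow_mul ht0.le]; ring_nf
  rw [hexp]
  rcases le_or_gt (4 * (a + a / b)) K with hK4 | hK4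
  · exact le_integral_returnWeight_of_four_mul_le hmeas hA hB hb0 (by linarith) hlow hup
      (by nlinarith) hK4
  · exact le_integral_returnWeight_of_lt_four_mul hmeas hA hB hb0 hb1.le hba
      (two_le_rpow_one_div hA hAB hb0 hb1.le) hlow hup ht0 hS hK.le hK4

theorem annealed_return_lower_bound {Ω : Type*} [MeasurableSpace Ω]
    (μ : Measure Ω) [IsProbabilityMeasure μ]
    (C : Ω → ℕ) (hmeas : Measurable C) (hpos : ∀ ω, 1 ≤ C ω)
    (A B a b : ℝ) (hA : 0 < A) (hB : 0 < B) (ha : 0 < a) (hb0 : 0 < b) (hb1 : b < 1)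
    (hlow : ∀ m : ℕ, 1 ≤ m → A * (m : ℝ) ^ (-a) ≤ (μ {ω | m ≤ C ω}).toReal)
    (hup : ∀ m : ℕ, 1 ≤ m → (μ {ω | m ≤ C ω}).toReal ≤ B * (m : ℝ) ^ (-b))
    (K : ℝ) (hK : 0 < K) (t : ℝ) (ht : Real.sqrt 288 < t) :
    Real.exp (-K) * (A / 2) / (1 + (2 * B / A) ^ (1 / b)) * t ^ (-(2 * a * (1 + 1 / b))) ≤
      ∫ ω, (1 / (C ω : ℝ)) * Real.exp (-t * K / Real.sqrt (C ω)) ∂μ :=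
  annealed_return_lower_bound_general μ C hmeas A B a b hA hb0 hb1 hlow hup K hK t ht
end
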